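/- Let S be a finite subset of Z^2, K(x,y;t) = 1 - t sum_{(i,j) in S} x^i y^j, and S(x,y;t) the generating function for walks on the slit plane with steps in S. Let Omega(x^{-1};t) in Q[x^{-1}][[t]] be the generating function for bridges, i.e. the coefficient of t^n x^{i} is the number of bridges of length n ending at (i,0) (so i <= 0), and let Omega_0(t) be the generating function for bridges ending at (0,0). Then Omega(x^{-1};0) = 0, and in Q[x,x^{-1},y,y^{-1}][[t]]: K(x,y;t) * S(x,y;t) = 1 - Omega(x^{-1};t); moreover the generating function L(t) for loops satisfies L(t) * (1 - Omega_0(t)) = 1. -/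

import Mathlib

open scoped Classical
open PowerSeries

namespace SlitPlane

/-- A point (or step) of the lattice `ℤ²`. -/
abbrev Pt := ℤ × ℤ

/-- All steps of the walk `l` belong to `S`.  A walk is identified with its
list of steps; it starts at the origin. -/
def StepsIn (S : Finset Pt) (l : List Pt) : Prop := ∀ s ∈ l, s ∈ S

/-- The vertex `w_i` of the walk reached after `i` steps. -/
def vert (l : List Pt) (i : ℕ) : Pt := (l.take i).sum

/-- Membership in the half-line `H = {(k,0) : k ≤ 0}`. -/
def OnH (p : Pt) : Prop := p.2 = 0 ∧ p.1 ≤ 0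

/-- Membership in the half-line `{(k,0) : k < 0}`. -/
def OnNegAxis (p : Pt) : Prop := p.2 = 0 ∧ p.1 < 0

/-- A walk on the slit plane: none of the vertices `w_1, ..., w_n` lies on `H`. -/
def AvoidsH (l : List Pt) : Prop := ∀ i, 1 ≤ i → i ≤ l.length → ¬ OnH (vert l i)

/-- Number of walks of length `n` on the slit plane, with steps in `S`, ending at `e`. -/
noncomputable def slitCount (S : Finset Pt) (n : ℕ) (e : Pt) : ℕ :=
  Set.ncard {l : List Pt | l.length = n ∧ StepsIn S l ∧ AvoidsH l ∧ l.sum = e}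

/-- Number of (unconstrained) walks of length `n` with steps in `S` ending at `e`. -/
noncomputable def walkCount (S : Finset Pt) (n : ℕ) (e : Pt) : ℕ :=
  Set.ncard {l : List Pt | l.length = n ∧ StepsIn S l ∧ l.sum = e}

/-- Number of loops of length `n` with steps in `S`: walks ending at the origin,
none of whose vertices lies on `{(k,0) : k < 0}`. -/
noncomputable def loopCount (S : Finset Pt) (n : ℕ) : ℕ :=
  Set.ncard {l : List Pt | l.length = n ∧ StepsIn S l ∧
    (∀ i ≤ l.length, ¬ OnNegAxis (vert l i)) ∧ l.sum = (0, 0)}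

end SlitPlane

namespace SlitPlane

/-- The Laurent polynomial ring `ℚ[x, x⁻¹]`. -/
abbrev L1 := AddMonoidAlgebra ℚ ℤ

/-- The Laurent polynomial ring `ℚ[x, x⁻¹, y, y⁻¹]`: monomial `(i,j)` is `x^i y^j`. -/
abbrev L2 := AddMonoidAlgebra ℚ (ℤ × ℤ)

/-- The embedding `ℚ[x,x⁻¹] → ℚ[x,x⁻¹,y,y⁻¹]`. -/
noncomputable def iotaX : L1 →+* L2 :=
  AddMonoidAlgebra.mapDomainRingHom ℚ (AddMonoidHom.inl ℤ ℤ)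

/-- The polynomial `K(x,y;t) = 1 - t ∑_{(i,j) ∈ S} x^i y^j`, as a power series in `t`. -/
noncomputable def Kpoly (S : Finset Pt) : PowerSeries L2 :=
  1 - PowerSeries.X * PowerSeries.C (∑ s ∈ S, AddMonoidAlgebra.single s (1 : ℚ))

/-- Number of bridges of length `n` ending at `(i,0)`: nonempty walks whose endpoint
lies on `H` and none of whose vertices `w_1, ..., w_{n-1}` lies on `H`. -/
noncomputable def bridgeCount (S : Finset Pt) (n : ℕ) (i : ℤ) : ℕ :=
  Set.ncard {l : List Pt | l.length = n ∧ l ≠ [] ∧ StepsIn S l ∧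
    (∀ k, 1 ≤ k → k < l.length → ¬ OnH (vert l k)) ∧
    OnH l.sum ∧ l.sum = (i, 0)}

/-!
Removing the last step of a walk of length `n + 1` whose vertices `w_1, …, w_n` avoid `H` leaves
a slit-plane walk of length `n`; according to whether `w_{n+1}` lies on `H`, the walk itself is a
slit-plane walk or a bridge. Coefficientwise this is `S = 1 + t (∑_{(i,j) ∈ S} x^i y^j) S - Ω`,
that is `K S = 1 - Ω`.

Cutting a loop at its first return to `H` (necessarily at the origin, since a loop never visits the
negative axis) writes it as a bridge ending at the origin followed by a loop, whence
`L = 1 + Ω₀ L`. The cut is unique because a bridge is never a proper prefix of another bridge.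
-/

open Finset.HasAntidiagonal

section Walks

variable {S : Finset Pt}

lemma vert_length (l : List Pt) : vert l l.length = l.sum := by
  simp [vert]

lemma vert_append_of_le {l : List Pt} (m : List Pt) {i : ℕ} (h : i ≤ l.length) :
    vert (l ++ m) i = vert l i := by
  simp [vert, List.take_append_of_le_length h]

lemma vert_append_length_add (l m : List Pt) (i : ℕ) :
    vert (l ++ m) (l.length + i) = l.sum + vert m i := by
  simp [vert, List.take_length_add_append]

lemma vert_take {l : List Pt} {j k : ℕ} (h : j ≤ k) : vert (l.take k) j = vert l j := by
  simp [vert, List.take_take, Nat.min_eq_left h]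

lemma stepsIn_append {l m : List Pt} : StepsIn S (l ++ m) ↔ StepsIn S l ∧ StepsIn S m := by
  simp [StepsIn, or_imp, forall_and]

lemma stepsIn_singleton {s : Pt} : StepsIn S [s] ↔ s ∈ S := by
  simp [StepsIn]

lemma finite_stepsIn (S : Finset Pt) (n : ℕ) : {l | l.length = n ∧ StepsIn S l}.Finite := by
  refine ((List.finite_length_eq S n).image (List.map Subtype.val)).subset ?_
  rintro l ⟨rfl, hl⟩
  exact ⟨l.attachWith (· ∈ S) hl, List.length_attachWith, List.attachWith_map_subtype_val hl⟩

lemma OnNegAxis.onH {p : Pt} (h : OnNegAxis p) : OnH p := ⟨h.1, h.2.le⟩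

lemma eq_zero_of_onH_of_not_onNegAxis {p : Pt} (h : OnH p) (h' : ¬ OnNegAxis p) : p = 0 :=
  Prod.ext (le_antisymm h.2 (not_lt.mp fun hlt => h' ⟨h.1, hlt⟩)) h.1

def AvoidsHInside (l : List Pt) : Prop := ∀ k, 1 ≤ k → k < l.length → ¬ OnH (vert l k)

lemma avoidsHInside_append_singleton (l : List Pt) (s : Pt) :
    AvoidsHInside (l ++ [s]) ↔ AvoidsH l := by
  simp only [AvoidsHInside, AvoidsH, List.length_append, List.length_singleton, Nat.lt_succ_iff]
  exact forall₂_congr fun k _ => forall_congr' fun hk => by rw [vert_append_of_le _ hk]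

lemma avoidsH_append_singleton (l : List Pt) (s : Pt) :
    AvoidsH (l ++ [s]) ↔ AvoidsH l ∧ ¬ OnH (l.sum + s) := by
  have hlast : vert (l ++ [s]) (l.length + 1) = l.sum + s := by simp [vert]
  constructor
  · intro h
    refine ⟨fun k hk1 hk2 => ?_, hlast ▸ h _ (by omega) (by simp)⟩
    rw [← vert_append_of_le [s] hk2]
    exact h k hk1 (by simp; omega)
  · rintro ⟨h, hs⟩ k hk1 hk2
    rcases Nat.lt_or_ge l.length k with hk | hk
    · obtain rfl : k = l.length + 1 := by simp at hk2; omega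
      rwa [hlast]
    · rw [vert_append_of_le [s] hk]
      exact h k hk1 hk

def slitSet (S : Finset Pt) (n : ℕ) (e : Pt) : Set (List Pt) :=
  {l | l.length = n ∧ StepsIn S l ∧ AvoidsH l ∧ l.sum = e}

def bridgeSet (S : Finset Pt) (n : ℕ) (e : Pt) : Set (List Pt) :=
  {l | l.length = n ∧ l ≠ [] ∧ StepsIn S l ∧ AvoidsHInside l ∧ OnH l.sum ∧ l.sum = e}

lemma slitSet_finite (S : Finset Pt) (n : ℕ) (e : Pt) : (slitSet S n e).Finite :=
  (finite_stepsIn S n).subset fun _ hl => ⟨hl.1, hl.2.1⟩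

lemma bridgeSet_finite (S : Finset Pt) (n : ℕ) (e : Pt) : (bridgeSet S n e).Finite :=
  (finite_stepsIn S n).subset fun _ hl => ⟨hl.1, hl.2.2.1⟩

lemma disjoint_slitSet_bridgeSet (S : Finset Pt) (n : ℕ) (e : Pt) :
    Disjoint (slitSet S (n + 1) e) (bridgeSet S (n + 1) e) := by
  refine Set.disjoint_left.mpr fun l ⟨hlen, _, hav, _⟩ ⟨_, _, _, _, hH, _⟩ => ?_
  exact hav l.length (by omega) le_rfl (vert_length l ▸ hH)

lemma slitSet_union_bridgeSet (S : Finset Pt) (n : ℕ) (e : Pt) :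
    slitSet S (n + 1) e ∪ bridgeSet S (n + 1) e =
      ⋃ s ∈ S, (· ++ [s]) '' slitSet S n (e - s) := by
  ext l
  rcases l.eq_nil_or_concat with rfl | ⟨m, s, rfl⟩
  · simp [slitSet, bridgeSet]
  · by_cases h : OnH (m.sum + s) <;>
      simp [slitSet, bridgeSet, stepsIn_append, stepsIn_singleton, avoidsH_append_singleton,
        avoidsHInside_append_singleton, eq_sub_iff_add_eq, h, and_comm, and_left_comm]

lemma slitCount_succ_add_ncard_bridgeSet (S : Finset Pt) (n : ℕ) (e : Pt) :
    slitCount S (n + 1) e + (bridgeSet S (n + 1) e).ncard = ∑ s ∈ S, slitCount S n (e - s) := by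
  have hdisj : (S : Set Pt).PairwiseDisjoint fun s => (· ++ [s]) '' slitSet S n (e - s) := by
    rintro a - b - hab
    refine Set.disjoint_left.mpr ?_
    rintro _ ⟨l, -, rfl⟩ ⟨m, -, h⟩
    exact hab (List.append_singleton_inj.mp h).2.symm
  change (slitSet S (n + 1) e).ncard + _ = _
  rw [← Set.ncard_union_eq (disjoint_slitSet_bridgeSet S n e) (slitSet_finite S _ e)
      (bridgeSet_finite S _ e), slitSet_union_bridgeSet, ← Finset.set_biUnion_coe,
    Set.Finite.ncard_biUnion S.finite_toSet (fun s _ => (slitSet_finite S n _).image _) hdisj,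
    finsum_mem_coe_finset]
  exact Finset.sum_congr rfl fun s _ =>
    Set.ncard_image_of_injective _ (List.append_left_injective [s])

lemma length_le_of_append_eq_append {b₁ b₂ m₁ m₂ : List Pt} (hb₁ : b₁ ≠ [])
    (hs₁ : OnH b₁.sum) (hb₂ : AvoidsHInside b₂) (h : b₁ ++ m₁ = b₂ ++ m₂) :
    b₂.length ≤ b₁.length := by
  by_contra! hlt
  refine hb₂ b₁.length (List.length_pos_iff.mpr hb₁) hlt ?_
  rwa [← vert_append_of_le m₂ hlt.le, ← h, vert_append_of_le m₁ le_rfl, vert_length]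

lemma eq_of_append_eq_append_of_mem_bridgeSet {b₁ b₂ m₁ m₂ : List Pt} {k₁ k₂ : ℕ} {e₁ e₂ : Pt}
    (hb₁ : b₁ ∈ bridgeSet S k₁ e₁) (hb₂ : b₂ ∈ bridgeSet S k₂ e₂) (h : b₁ ++ m₁ = b₂ ++ m₂) :
    b₁ = b₂ ∧ m₁ = m₂ :=
  List.append_inj h <| le_antisymm
    (length_le_of_append_eq_append hb₂.2.1 hb₂.2.2.2.2.1 hb₁.2.2.2.1 h.symm)
    (length_le_of_append_eq_append hb₁.2.1 hb₁.2.2.2.2.1 hb₂.2.2.2.1 h)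

def loopSet (S : Finset Pt) (n : ℕ) : Set (List Pt) :=
  {l | l.length = n ∧ StepsIn S l ∧ (∀ i ≤ l.length, ¬ OnNegAxis (vert l i)) ∧ l.sum = (0, 0)}

lemma loopSet_finite (S : Finset Pt) (n : ℕ) : (loopSet S n).Finite :=
  (finite_stepsIn S n).subset fun _ hl => ⟨hl.1, hl.2.1⟩

-- `b.length + m.length` rather than `(b ++ m).length`: the simp normal form, as needed below.
lemma forall_vert_append_not_onNegAxis_iff {b : List Pt} (m : List Pt) (hin : AvoidsHInside b)
    (hsum : b.sum = 0) :
    (∀ i ≤ b.length + m.length, ¬ OnNegAxis (vert (b ++ m) i)) ↔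
      ∀ i ≤ m.length, ¬ OnNegAxis (vert m i) := by
  have hshift (i : ℕ) : vert (b ++ m) (b.length + i) = vert m i := by
    rw [vert_append_length_add, hsum, zero_add]
  constructor
  · intro h i hi
    exact hshift i ▸ h (b.length + i) (by omega)
  · intro h i hi
    rcases le_or_gt i b.length with hib | hib
    · rw [vert_append_of_le m hib]
      intro hneg
      rcases Nat.eq_zero_or_pos i with rfl | hi0
      · exact lt_irrefl 0 hneg.2
      rcases hib.lt_or_eq with hib | rfl
      · exact hin i hi0 hib hneg.onH
      · rw [vert_length, hsum] at hneg
        exact lt_irrefl 0 hneg.2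
    · obtain ⟨j, rfl⟩ := Nat.exists_eq_add_of_le hib.le
      rw [hshift]
      exact h j (by omega)

lemma append_mem_loopSet_iff {b m : List Pt} {k j : ℕ} (hb : b ∈ bridgeSet S k 0) :
    b ++ m ∈ loopSet S (k + j) ↔ m ∈ loopSet S j := by
  obtain ⟨rfl, -, hst, hin, -, hsum⟩ := hb
  simp only [loopSet, Set.mem_ofPred_eq, forall_vert_append_not_onNegAxis_iff m hin hsum,
    List.length_append, Nat.add_left_cancel_iff, stepsIn_append, hst, true_and,
    List.sum_append, hsum, zero_add]

lemma exists_take_mem_bridgeSet {l : List Pt} {n : ℕ} (hl : l ∈ loopSet S (n + 1)) :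
    ∃ k, l.take k ∈ bridgeSet S k 0 := by
  obtain ⟨hlen, hst, hneg, hsum⟩ := hl
  have hex : ∃ k, 0 < k ∧ k ≤ l.length ∧ OnH (vert l k) :=
    ⟨l.length, by omega, le_rfl, by rw [vert_length, hsum]; exact ⟨rfl, le_rfl⟩⟩
  obtain ⟨hk0, hkl, hkH⟩ := Nat.find_spec hex
  set k := Nat.find hex
  have hk0' : vert l k = 0 := eq_zero_of_onH_of_not_onNegAxis hkH (hneg k hkl)
  have htake : (l.take k).length = k := List.length_take_of_le hkl
  refine ⟨k, htake, ?_, fun x hx => hst x (List.take_subset k l hx), fun j hj1 hj2 hjH => ?_, ?_, ?_⟩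
  · exact List.ne_nil_of_length_pos (by omega)
  · rw [htake] at hj2
    rw [vert_take hj2.le] at hjH
    exact Nat.find_min hex hj2 ⟨hj1, by omega, hjH⟩
  · rw [← vert_length, htake, vert_take le_rfl]; exact hkH
  · rw [← vert_length, htake, vert_take le_rfl, hk0']

lemma loopSet_succ (S : Finset Pt) (n : ℕ) :
    loopSet S (n + 1) = (fun p : List Pt × List Pt => p.1 ++ p.2) ''
      ⋃ p ∈ antidiagonal (n + 1), bridgeSet S p.1 0 ×ˢ loopSet S p.2 := by
  ext l
  simp only [Set.mem_image, Set.mem_iUnion, Set.mem_prod, mem_antidiagonal, exists_prop,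
    Prod.exists]
  constructor
  · intro hl
    obtain ⟨k, hk⟩ := exists_take_mem_bridgeSet hl
    have hkn : k ≤ n + 1 := hl.1 ▸ hk.1 ▸ List.length_take_le' k l
    refine ⟨l.take k, l.drop k, ⟨k, n + 1 - k, by omega, hk, ?_⟩, List.take_append_drop k l⟩
    rwa [← append_mem_loopSet_iff hk, List.take_append_drop, Nat.add_sub_cancel' hkn]
  · rintro ⟨b, m, ⟨k, j, hkj, hb, hm⟩, rfl⟩
    rw [← hkj]
    exact (append_mem_loopSet_iff hb).mpr hm

lemma loopCount_succ (S : Finset Pt) (n : ℕ) :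
    loopCount S (n + 1) = ∑ p ∈ antidiagonal (n + 1), bridgeCount S p.1 0 * loopCount S p.2 := by
  have hinj : Set.InjOn (fun p : List Pt × List Pt => p.1 ++ p.2)
      (⋃ p ∈ antidiagonal (n + 1), bridgeSet S p.1 0 ×ˢ loopSet S p.2) := by
    rintro ⟨b₁, m₁⟩ h₁ ⟨b₂, m₂⟩ h₂ h
    simp only [Set.mem_iUnion, Set.mem_prod] at h₁ h₂
    obtain ⟨_, _, hb₁, _⟩ := h₁
    obtain ⟨_, _, hb₂, _⟩ := h₂
    exact Prod.ext_iff.mpr (eq_of_append_eq_append_of_mem_bridgeSet hb₁ hb₂ h)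
  have hdisj : (antidiagonal (n + 1) : Set (ℕ × ℕ)).PairwiseDisjoint
      fun p => bridgeSet S p.1 0 ×ˢ loopSet S p.2 := by
    rintro p hp q hq hpq
    have h1 : p.1 ≠ q.1 := fun h => hpq <| by
      rw [Finset.mem_coe, mem_antidiagonal] at hp hq
      exact Prod.ext h (by omega)
    exact Set.disjoint_prod.mpr <| Or.inl <| Set.disjoint_left.mpr fun b hbp hbq =>
      h1 (hbp.1.symm.trans hbq.1)
  change (loopSet S (n + 1)).ncard = _
  rw [loopSet_succ, hinj.ncard_image, ← Finset.set_biUnion_coe,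
    Set.Finite.ncard_biUnion (Finset.finite_toSet _)
      (fun p _ => (bridgeSet_finite S _ _).prod (loopSet_finite S _)) hdisj,
    finsum_mem_coe_finset]
  simp only [Set.ncard_prod]
  rfl

end Walks

lemma ncard_setOf_length_zero (P : List Pt → Prop) :
    {l : List Pt | l.length = 0 ∧ P l}.ncard = if P [] then 1 else 0 := by
  split_ifs with h
  · convert Set.ncard_singleton ([] : List Pt)
    ext l
    simp only [List.length_eq_zero_iff, Set.mem_ofPred_eq, Set.mem_singleton_iff,
      and_iff_left_iff_imp]
    rintro rfl
    exact h
  · convert Set.ncard_empty (List Pt)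
    ext l
    simp only [List.length_eq_zero_iff, Set.mem_ofPred_eq, Set.mem_empty_iff_false, iff_false,
      not_and]
    rintro rfl
    exact h

lemma slitCount_zero (S : Finset Pt) (e : Pt) : slitCount S 0 e = if e = 0 then 1 else 0 := by
  rw [slitCount, ncard_setOf_length_zero]
  have hnil : AvoidsH [] := fun i hi hi' => absurd hi' (by simp; omega)
  simp [StepsIn, hnil, eq_comm]

lemma bridgeCount_zero (S : Finset Pt) (i : ℤ) : bridgeCount S 0 i = 0 := by
  rw [bridgeCount, ncard_setOf_length_zero]
  simp

lemma loopCount_zero (S : Finset Pt) : loopCount S 0 = 1 := by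
  rw [loopCount, ncard_setOf_length_zero]
  simp [StepsIn, vert, OnNegAxis, Prod.mk_zero_zero]

lemma ncard_bridgeSet (S : Finset Pt) (n : ℕ) (e : Pt) :
    (bridgeSet S n e).ncard = if e.2 = 0 then bridgeCount S n e.1 else 0 := by
  split_ifs with h
  · obtain ⟨i, j⟩ := e
    obtain rfl : j = 0 := h
    rfl
  · convert Set.ncard_empty (List Pt)
    exact Set.eq_empty_of_forall_notMem fun l hl => h (hl.2.2.2.2.2 ▸ hl.2.2.2.2.1.1)

lemma coeff_iotaX (g : L1) (e : Pt) : (iotaX g).coeff e = if e.2 = 0 then g.coeff e.1 else 0 := by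
  change Finsupp.mapDomain (AddMonoidHom.inl ℤ ℤ) g.coeff e = _
  obtain ⟨i, j⟩ := e
  split_ifs with h
  · obtain rfl : j = 0 := h
    exact Finsupp.mapDomain_apply (fun a b h => congrArg Prod.fst h) g.coeff i
  · refine Finsupp.mapDomain_of_notMem_range _ _ ?_
    rintro ⟨i', hi⟩
    exact h (congrArg Prod.snd hi).symm

lemma coeff_sum_single_mul (S : Finset Pt) (g : L2) (e : Pt) :
    ((∑ s ∈ S, AddMonoidAlgebra.single s (1 : ℚ)) * g).coeff e = ∑ s ∈ S, g.coeff (e - s) := by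
  rw [Finset.sum_mul, AddMonoidAlgebra.coeff_sum, Finsupp.finsetSum_apply]
  simp only [AddMonoidAlgebra.coeff_single_mul_apply, one_mul, neg_add_eq_sub]

lemma coeff_zero_Kpoly_mul (S : Finset Pt) (F : PowerSeries L2) :
    coeff 0 (Kpoly S * F) = coeff 0 F := by
  rw [Kpoly, sub_mul, one_mul, mul_assoc, map_sub, coeff_zero_X_mul, sub_zero]

lemma coeff_succ_Kpoly_mul (S : Finset Pt) (F : PowerSeries L2) (n : ℕ) :
    coeff (n + 1) (Kpoly S * F) =
      coeff (n + 1) F - (∑ s ∈ S, AddMonoidAlgebra.single s (1 : ℚ)) * coeff n F := by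
  rw [Kpoly, sub_mul, one_mul, mul_assoc, map_sub, coeff_succ_X_mul, coeff_C_mul]

/-- `K(x,y;t) S(x,y;t) = 1 - Ω(x⁻¹;t)` where `Ω` is the generating
function of bridges, `Ω(x⁻¹;0) = 0`, and `L(t)(1 - Ω₀(t)) = 1` where `Ω₀` counts
bridges ending at the origin and `L` counts loops. -/
theorem statement11 (S : Finset Pt)
    (Sgf : PowerSeries L2) (Omega : PowerSeries L1) (Omega0 L : PowerSeries ℚ)
    (hS : ∀ (n : ℕ) (e : Pt),
      (PowerSeries.coeff n Sgf).coeff e = (slitCount S n e : ℚ))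
    (hOmega : ∀ (n : ℕ) (i : ℤ),
      (PowerSeries.coeff n Omega).coeff i = (bridgeCount S n i : ℚ))
    (hOmega0 : ∀ n : ℕ, PowerSeries.coeff n Omega0 = (bridgeCount S n 0 : ℚ))
    (hL : ∀ n : ℕ, PowerSeries.coeff n L = (loopCount S n : ℚ)) :
    PowerSeries.coeff 0 Omega = 0 ∧
    Kpoly S * Sgf = 1 - PowerSeries.map iotaX Omega ∧
    L * (1 - Omega0) = 1 := by
  have hΩ : coeff 0 Omega = 0 := by
    ext i
    rw [hOmega, bridgeCount_zero, Nat.cast_zero, AddMonoidAlgebra.coeff_zero, Finsupp.zero_apply]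
  refine ⟨hΩ, ?_, ?_⟩
  · ext (_ | n) e
    · rw [coeff_zero_Kpoly_mul, hS, slitCount_zero, map_sub, coeff_map, hΩ, map_zero, sub_zero,
        coeff_one, if_pos rfl]
      simp [AddMonoidAlgebra.one_def, Finsupp.single_apply, eq_comm]
    · have hrec := slitCount_succ_add_ncard_bridgeSet S n e
      rw [ncard_bridgeSet] at hrec
      rw [coeff_succ_Kpoly_mul, map_sub, coeff_map, coeff_one, if_neg n.succ_ne_zero, zero_sub,
        AddMonoidAlgebra.coeff_sub, Finsupp.sub_apply, coeff_sum_single_mul,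
        AddMonoidAlgebra.coeff_neg, Finsupp.neg_apply, coeff_iotaX]
      simp only [hS, hOmega]
      split_ifs at hrec ⊢ <;> qify at hrec <;> linarith
  · ext n
    rw [mul_sub, mul_one, mul_comm L, map_sub, coeff_mul, coeff_one]
    rcases n with _ | n
    · simp [hL, hOmega0, loopCount_zero, bridgeCount_zero]
    · rw [if_neg n.succ_ne_zero, hL, loopCount_succ]
      push_cast
      simp [hL, hOmega0]

end SlitPlane
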